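/- Let u : [0,1] → ℝ be a smooth positive function and let w : [0,1] → ℝ be smooth with w(0) = w(1) = 0. Then ∫_0^1 |w'(z)|² dz ≤ C_0 ∫_0^1 | (w/u)'(z) |² |u(z)|² dz, where one may take C_0 = 2 ( 1 + ‖u'‖²_{L²(0,1)} / min_{z∈[0,1]} |u(z)|² ). -/

import Mathlib

open MeasureTheory Set Filter Function

noncomputable section

/-- partial derivative in the first variable -/
def pdx (f : ℝ → ℝ → ℝ) : ℝ → ℝ → ℝ := fun x y => deriv (fun t => f t y) x

/-- partial derivative in the second variable -/
def pdy (f : ℝ → ℝ → ℝ) : ℝ → ℝ → ℝ := fun x y => deriv (f x) y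

/-- Japanese bracket ⟨y⟩ = √(1+y²) -/
def jb (y : ℝ) : ℝ := Real.sqrt (1 + y ^ 2)

/-- smoothness of a function of two real variables -/
def Smooth2 (f : ℝ → ℝ → ℝ) : Prop := ContDiff ℝ (⊤ : ℕ∞) (Function.uncurry f)

/-- L² norm of a function on a set of reals -/
def L2 (s : Set ℝ) (f : ℝ → ℝ) : ℝ := Real.sqrt (∫ y in s, f y ^ 2)

/-- L² norm of a two-variable function on a product of sets -/
def L2p (s t : Set ℝ) (f : ℝ → ℝ → ℝ) : ℝ :=
  Real.sqrt (∫ x in s, ∫ y in t, f x y ^ 2)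

/-- L^∞ norm of a two-variable function on a product of sets -/
def LinfOn (s t : Set ℝ) (f : ℝ → ℝ → ℝ) : ℝ :=
  ⨆ p : ↥(s ×ˢ t), |f p.1.1 p.1.2|

/-- scaled gradient norm ‖∇_ε f‖_{L²} on [0,L]×[0,1/√ε] -/
def gradN (L ε : ℝ) (f : ℝ → ℝ → ℝ) : ℝ :=
  Real.sqrt (∫ x in Icc (0:ℝ) L, ∫ y in Icc (0:ℝ) (1 / Real.sqrt ε),
    (ε * pdx f x y ^ 2 + pdy f x y ^ 2))

/-- weighted H^k norm (in the second variable, on (0,∞)) of a one-variable function: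
`‖⟨y⟩ⁿ f‖_{H^k} = Σ_{i≤k} ‖⟨y⟩ⁿ ∂_y^i f‖_{L²(0,∞)}` -/
def HW (n k : ℕ) (f : ℝ → ℝ) : ℝ :=
  ∑ i ∈ Finset.range (k + 1), L2 (Ioi 0) (fun y => jb y ^ n * iteratedDeriv i f y)

/-- W^{k,q} norm on the rectangle [0,L]×[0,1] -/
def sobN (L : ℝ) (k : ℕ) (q : ℝ) (f : ℝ → ℝ → ℝ) : ℝ :=
  ∑ i ∈ Finset.range (k + 1), ∑ j ∈ Finset.range (k + 1 - i),
    (∫ x in Icc (0:ℝ) L, ∫ z in Icc (0:ℝ) 1, |(pdx^[i] (pdy^[j] f)) x z| ^ q) ^ (1 / q)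

end

lemma cs_helper {g : ℝ → ℝ} {a b : ℝ} (hab : a ≤ b) (hg : ContinuousOn g (Icc a b)) :
    (∫ t in Ioc a b, g t) ^ 2 ≤ (b - a) * ∫ t in Ioc a b, g t ^ 2 := by
  set μ := volume.restrict (Ioc a b) with hμ
  have hpq : (2:ℝ).HolderConjugate 2 := Real.holderConjugate_iff.2 ⟨one_lt_two, by norm_num⟩
  have hgm : AEStronglyMeasurable g μ :=
    (hg.mono Ioc_subset_Icc_self).aestronglyMeasurable measurableSet_Ioc
  have hint2 : Integrable (fun t => g t ^ 2) μ :=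
    ((hg.pow 2).integrableOn_Icc).mono_set Ioc_subset_Icc_self
  have hg2 : MemLp g (ENNReal.ofReal 2) μ := by
    rw [show ENNReal.ofReal 2 = 2 by norm_num]
    exact (memLp_two_iff_integrable_sq hgm).2 (by simpa [sq] using hint2)
  have h1 : MemLp (fun _ : ℝ => (1:ℝ)) (ENNReal.ofReal 2) μ := memLp_const 1
  have hCS := integral_mul_norm_le_Lp_mul_Lq hpq hg2 h1
  have hnorm1 : (∫ t, ‖(1:ℝ)‖ ^ (2:ℝ) ∂μ) = b - a := by
    simp [μ, Measure.restrict_apply, Real.volume_Ioc, ENNReal.toReal_ofReal, hab]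
  have hnormg : (∫ t, ‖g t‖ ^ (2:ℝ) ∂μ) = ∫ t, g t ^ 2 ∂μ := by
    refine integral_congr_ae (Filter.Eventually.of_forall fun t => ?_)
    show ‖g t‖ ^ (2:ℝ) = g t ^ 2
    rw [Real.rpow_two, Real.norm_eq_abs, sq_abs]
  have hgabs : (∫ t, ‖g t‖ * ‖(1:ℝ)‖ ∂μ) = ∫ t, |g t| ∂μ := by simp
  have key : |∫ t, g t ∂μ| ≤ (∫ t, g t ^ 2 ∂μ) ^ ((1:ℝ)/2) * (b - a) ^ ((1:ℝ)/2) := by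
    calc |∫ t, g t ∂μ| ≤ ∫ t, |g t| ∂μ := by
          simpa using norm_integral_le_integral_norm (μ := μ) g
      _ ≤ _ := by rw [← hgabs, ← hnormg, ← hnorm1]; exact hCS
  have hI2 : (0:ℝ) ≤ ∫ t, g t ^ 2 ∂μ := integral_nonneg fun t => sq_nonneg _
  have hba : (0:ℝ) ≤ b - a := sub_nonneg.2 hab
  calc (∫ t in Ioc a b, g t) ^ 2 = |∫ t, g t ∂μ| ^ 2 := by rw [sq_abs]
    _ ≤ ((∫ t, g t ^ 2 ∂μ) ^ ((1:ℝ)/2) * (b - a) ^ ((1:ℝ)/2)) ^ 2 := by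
        apply pow_le_pow_left₀ (abs_nonneg _) key
    _ = (b - a) * ∫ t in Ioc a b, g t ^ 2 := by
        rw [mul_pow, ← Real.rpow_natCast _ 2, ← Real.rpow_natCast ((b-a) ^ ((1:ℝ)/2)) 2,
          ← Real.rpow_mul hI2, ← Real.rpow_mul hba]
        norm_num [mul_comm]
        exact Or.inl rfl

/-- coercivity estimate with the explicit constant
`C₀ = 2(1 + ‖u'‖²_{L²(0,1)} / min_{z∈[0,1]} |u(z)|²)`. -/
theorem stmt_8 (u w : ℝ → ℝ) (hu : ContDiff ℝ (⊤ : ℕ∞) u)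
    (hupos : ∀ z ∈ Icc (0:ℝ) 1, 0 < u z)
    (hw : ContDiff ℝ (⊤ : ℕ∞) w) (hw0 : w 0 = 0) (hw1 : w 1 = 0) :
    ∫ z in Icc (0:ℝ) 1, deriv w z ^ 2
      ≤ (2 * (1 + (∫ z in Icc (0:ℝ) 1, deriv u z ^ 2) / (⨅ z : ↥(Icc (0:ℝ) 1), u z.1 ^ 2)))
        * ∫ z in Icc (0:ℝ) 1, deriv (fun t => w t / u t) z ^ 2 * u z ^ 2 := by
  have h01 : (0:ℝ) ≤ 1 := zero_le_one
  set f : ℝ → ℝ := fun t => w t / u t with hfdef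
  set g : ℝ → ℝ := fun z => (deriv w z * u z - w z * deriv u z) / u z ^ 2 with hgdef
  have huc : Continuous u := hu.continuous
  have hwc : Continuous w := hw.continuous
  have hu' : Continuous (deriv u) := hu.continuous_deriv (mod_cast le_top)
  have hw' : Continuous (deriv w) := hw.continuous_deriv (mod_cast le_top)
  have hune : ∀ z ∈ Icc (0:ℝ) 1, u z ≠ 0 := fun z hz => (hupos z hz).ne'
  have hder : ∀ z ∈ Icc (0:ℝ) 1, HasDerivAt f (g z) z := by
    intro z hz
    exact ((hw.differentiable (by simp) z).hasDerivAt.div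
      ((hu.differentiable (by simp) z).hasDerivAt) (hune z hz))
  have hderiv_eq : ∀ z ∈ Icc (0:ℝ) 1, deriv f z = g z :=
    fun z hz => (hder z hz).deriv
  have hgc : ContinuousOn g (Icc (0:ℝ) 1) := by
    apply ContinuousOn.div ((hw'.mul huc).sub (hwc.mul hu')).continuousOn
      (huc.pow 2).continuousOn
    intro z hz; exact pow_ne_zero 2 (hune z hz)
  have hfc : ContinuousOn f (Icc (0:ℝ) 1) :=
    ContinuousOn.div hwc.continuousOn huc.continuousOn hune
  set m := ⨅ z : ↥(Icc (0:ℝ) 1), u z.1 ^ 2 with hmdef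
  have hbdd : BddBelow (range fun z : ↥(Icc (0:ℝ) 1) => u z.1 ^ 2) :=
    ⟨0, by rintro x ⟨z, rfl⟩; positivity⟩
  have hm_le : ∀ z ∈ Icc (0:ℝ) 1, m ≤ u z ^ 2 := fun z hz =>
    ciInf_le hbdd ⟨z, hz⟩
  have hm_pos : 0 < m := by
    obtain ⟨z₀, hz₀, hmin⟩ := isCompact_Icc.exists_isMinOn (nonempty_Icc.2 h01)
      ((huc.pow 2).continuousOn : ContinuousOn (fun z => u z ^ 2) (Icc 0 1))
    have hle : u z₀ ^ 2 ≤ m := le_ciInf fun z => hmin z.2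
    exact lt_of_lt_of_le (pow_pos (hupos z₀ hz₀) 2) hle
  have hint_gu : IntegrableOn (fun z => g z ^ 2 * u z ^ 2) (Icc (0:ℝ) 1) :=
    ((hgc.pow 2).mul (huc.pow 2).continuousOn).integrableOn_Icc
  have hint_g2 : IntegrableOn (fun z => g z ^ 2) (Icc (0:ℝ) 1) :=
    (hgc.pow 2).integrableOn_Icc
  have hint_fu' : IntegrableOn (fun z => f z ^ 2 * deriv u z ^ 2) (Icc (0:ℝ) 1) :=
    ((hfc.pow 2).mul (hu'.pow 2).continuousOn).integrableOn_Icc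
  have hint_u'2 : IntegrableOn (fun z => deriv u z ^ 2) (Icc (0:ℝ) 1) :=
    ((hu'.pow 2).continuousOn).integrableOn_Icc
  have hintw : IntegrableOn (fun z => deriv w z ^ 2) (Icc (0:ℝ) 1) :=
    ((hw'.pow 2).continuousOn).integrableOn_Icc
  set A := ∫ z in Icc (0:ℝ) 1, g z ^ 2 * u z ^ 2 with hAdef
  set B := ∫ z in Icc (0:ℝ) 1, g z ^ 2 with hBdef
  set D := ∫ z in Icc (0:ℝ) 1, deriv u z ^ 2 with hDdef
  have hAeq : ∫ z in Icc (0:ℝ) 1, deriv f z ^ 2 * u z ^ 2 = A := by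
    rw [hAdef]
    apply setIntegral_congr_fun measurableSet_Icc
    intro z hz
    simp [hderiv_eq z hz]
  have hf0 : f 0 = 0 := by simp [hfdef, hw0]
  have hsup : ∀ z ∈ Icc (0:ℝ) 1, f z ^ 2 ≤ B := by
    intro z hz
    obtain ⟨hz0, hz1⟩ := hz
    have hsub : Icc (0:ℝ) z ⊆ Icc 0 1 := Icc_subset_Icc le_rfl hz1
    have hftc : ∫ t in (0:ℝ)..z, g t = f z - f 0 := by
      apply intervalIntegral.integral_eq_sub_of_hasDerivAt
      · intro t ht
        rw [uIcc_of_le hz0] at ht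
        exact hder t (hsub ht)
      · exact (hgc.mono hsub).intervalIntegrable_of_Icc hz0
    have hfz : f z = ∫ t in Ioc (0:ℝ) z, g t := by
      rw [← intervalIntegral.integral_of_le hz0, hftc, hf0, sub_zero]
    have hcs := cs_helper hz0 (hgc.mono hsub)
    have hmono : ∫ t in Ioc (0:ℝ) z, g t ^ 2 ≤ B := by
      apply setIntegral_mono_set hint_g2
        (Filter.Eventually.of_forall fun t => sq_nonneg _)
        (HasSubset.Subset.eventuallyLE (Ioc_subset_Icc_self.trans hsub))
    calc f z ^ 2 = (∫ t in Ioc (0:ℝ) z, g t) ^ 2 := by rw [hfz]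
      _ ≤ (z - 0) * ∫ t in Ioc (0:ℝ) z, g t ^ 2 := hcs
      _ ≤ 1 * B := mul_le_mul (by linarith) hmono
          (setIntegral_nonneg measurableSet_Ioc fun t _ => sq_nonneg _) zero_le_one
      _ = B := one_mul B
  have hpt : ∀ z ∈ Icc (0:ℝ) 1,
      deriv w z ^ 2 ≤ 2 * (g z ^ 2 * u z ^ 2) + 2 * (f z ^ 2 * deriv u z ^ 2) := by
    intro z hz
    have huz := hune z hz
    have hid : deriv w z = g z * u z + f z * deriv u z := by
      show deriv w z = ((deriv w z * u z - w z * deriv u z) / u z ^ 2) * u z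
        + (w z / u z) * deriv u z
      field_simp
      ring
    rw [hid]
    nlinarith [sq_nonneg (g z * u z - f z * deriv u z)]
  have step1 : ∫ z in Icc (0:ℝ) 1, deriv w z ^ 2
      ≤ ∫ z in Icc (0:ℝ) 1, (2 * (g z ^ 2 * u z ^ 2) + 2 * (f z ^ 2 * deriv u z ^ 2)) :=
    setIntegral_mono_on hintw ((hint_gu.const_mul 2).add (hint_fu'.const_mul 2))
      measurableSet_Icc hpt
  have step2 : ∫ z in Icc (0:ℝ) 1, (2 * (g z ^ 2 * u z ^ 2) + 2 * (f z ^ 2 * deriv u z ^ 2))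
      = 2 * A + 2 * ∫ z in Icc (0:ℝ) 1, f z ^ 2 * deriv u z ^ 2 := by
    rw [integral_add (hint_gu.const_mul 2) (hint_fu'.const_mul 2),
      integral_const_mul, integral_const_mul, hAdef]
  have step3 : ∫ z in Icc (0:ℝ) 1, f z ^ 2 * deriv u z ^ 2 ≤ B * D := by
    calc ∫ z in Icc (0:ℝ) 1, f z ^ 2 * deriv u z ^ 2
        ≤ ∫ z in Icc (0:ℝ) 1, B * deriv u z ^ 2 := by
          apply setIntegral_mono_on hint_fu' (hint_u'2.const_mul B) measurableSet_Icc
          intro z hz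
          exact mul_le_mul_of_nonneg_right (hsup z hz) (sq_nonneg _)
      _ = B * D := by rw [integral_const_mul, hDdef]
  have hBA : m * B ≤ A := by
    rw [hAdef, hBdef, ← integral_const_mul]
    apply setIntegral_mono_on (hint_g2.const_mul m) hint_gu measurableSet_Icc
    intro z hz
    calc m * g z ^ 2 ≤ u z ^ 2 * g z ^ 2 :=
          mul_le_mul_of_nonneg_right (hm_le z hz) (sq_nonneg _)
      _ = g z ^ 2 * u z ^ 2 := mul_comm _ _
  have hB_nonneg : 0 ≤ B := setIntegral_nonneg measurableSet_Icc fun z _ => sq_nonneg _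
  have hD_nonneg : 0 ≤ D := setIntegral_nonneg measurableSet_Icc fun z _ => sq_nonneg _
  have hA_nonneg : 0 ≤ A := setIntegral_nonneg measurableSet_Icc fun z _ =>
    mul_nonneg (sq_nonneg _) (sq_nonneg _)
  have hB_le : B ≤ A / m := (le_div_iff₀ hm_pos).2 (by linarith [hBA])
  rw [hAeq]
  have hBD : B * D ≤ (A / m) * D := mul_le_mul_of_nonneg_right hB_le hD_nonneg
  have hfinal : 2 * (1 + D / m) * A = 2 * A + 2 * ((A / m) * D) := by
    field_simp
  calc ∫ z in Icc (0:ℝ) 1, deriv w z ^ 2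
      ≤ 2 * A + 2 * ∫ z in Icc (0:ℝ) 1, f z ^ 2 * deriv u z ^ 2 := step2 ▸ step1
    _ ≤ 2 * A + 2 * (B * D) := by linarith [step3]
    _ ≤ 2 * (1 + D / m) * A := by rw [hfinal]; linarith [hBD]
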